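/- arXiv:2501.02136 — 2 statements merged into one kernel-verified Lean document; each statement's English description precedes it below -/
import Mathlib

section
/- Let G be a simple graph on n vertices with at most α(n−1) edges, where α ≥ 1 and n ≥ 1 are natural numbers. Consider any orientation of the edges of G in which every edge is directed toward an endpoint of maximal degree, i.e., for every edge directed from u to v we have deg(v) ≥ deg(u). Then every vertex of G has out-degree strictly less than √(2αn). -/
/-- `o` is an orientation of the graph `G`: it assigns to each edge of `G` one of its two
endpoints as head. -/
def IsOrientation {V : Type*} (G : SimpleGraph V) (o : Sym2 V → V) : Prop :=
  ∀ e ∈ G.edgeSet, o e ∈ e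

/-- The out-degree of a vertex `v` under an orientation `o` of `G`: the number of edges of `G`
incident to `v` whose head is not `v` (i.e. whose tail is `v`). -/
def outDegree {V : Type*} [Fintype V] [DecidableEq V] (G : SimpleGraph V) [DecidableRel G.Adj]
    (o : Sym2 V → V) (v : V) : ℕ :=
  (G.edgeFinset.filter (fun e => v ∈ e ∧ o e ≠ v)).card

/-- Let `G` be a simple graph on `n` vertices with at most `α(n−1)` edges,
where `α ≥ 1` and `n ≥ 1`. Consider any orientation of the edges of `G` in which every edge is
directed toward an endpoint of maximal degree: for every edge directed from `u` to `v` we have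
`deg v ≥ deg u`. Then every vertex of `G` has out-degree strictly less than `√(2αn)`. -/
theorem stmt1 {V : Type*} [Fintype V] [DecidableEq V] (G : SimpleGraph V) [DecidableRel G.Adj]
    (n α : ℕ) (hn : 1 ≤ n) (hα : 1 ≤ α) (hcard : Fintype.card V = n)
    (hedges : G.edgeFinset.card ≤ α * (n - 1))
    (o : Sym2 V → V) (ho : IsOrientation G o)
    (hmax : ∀ u v : V, G.Adj u v → o s(u, v) = v → G.degree u ≤ G.degree v)
    (v : V) :
    (outDegree G o v : ℝ) < Real.sqrt (2 * α * n) := by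
  classical
  set S := G.edgeFinset.filter (fun e => v ∈ e ∧ o e ≠ v) with hS
  set d := outDegree G o v with hd
  have hdS : d = S.card := rfl
  have key : ∀ e ∈ S, e = s(v, o e) := by
    intro e he
    simp only [hS, Finset.mem_filter, SimpleGraph.mem_edgeFinset] at he
    obtain ⟨heE, hve, hne⟩ := he
    exact ((Sym2.mem_and_mem_iff (Ne.symm hne)).mp ⟨hve, ho e heE⟩)
  have hadj : ∀ e ∈ S, G.Adj v (o e) := by
    intro e he
    have heE : e ∈ G.edgeSet := by
      have := Finset.mem_filter.mp he
      exact SimpleGraph.mem_edgeFinset.mp this.1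
    rw [key e he] at heE
    exact heE
  have hdeg : ∀ e ∈ S, G.degree v ≤ G.degree (o e) := by
    intro e he
    refine hmax v (o e) (hadj e he) ?_
    rw [← key e he]
  -- d ≤ degree v
  have hd_le : d ≤ G.degree v := by
    rw [hdS, ← G.card_incidenceFinset_eq_degree v]
    apply Finset.card_le_card
    intro e he
    have := Finset.mem_filter.mp he
    rw [SimpleGraph.mem_incidenceFinset]
    exact ⟨SimpleGraph.mem_edgeFinset.mp this.1, this.2.1⟩
  -- injectivity of o on S
  have hinj : Set.InjOn o S := by
    intro e he e' he' h
    rw [key e he, key e' he', h]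
  -- d * d ≤ sum of degrees of heads
  have hsum1 : d * G.degree v ≤ ∑ e ∈ S, G.degree (o e) := by
    calc d * G.degree v = ∑ _e ∈ S, G.degree v := by rw [Finset.sum_const, hdS, smul_eq_mul]
    _ ≤ ∑ e ∈ S, G.degree (o e) := Finset.sum_le_sum hdeg
  have hsum2 : ∑ e ∈ S, G.degree (o e) = ∑ w ∈ S.image o, G.degree w := by
    rw [Finset.sum_image (fun x hx y hy h => hinj hx hy h)]
  have hsum3 : ∑ w ∈ S.image o, G.degree w ≤ ∑ w, G.degree w :=
    Finset.sum_le_sum_of_subset (Finset.subset_univ _)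
  have htotal : ∑ w, G.degree w = 2 * G.edgeFinset.card := G.sum_degrees_eq_twice_card_edges
  have hdd : d * d ≤ 2 * (α * (n - 1)) := by
    calc d * d ≤ d * G.degree v := Nat.mul_le_mul_left d hd_le
    _ ≤ 2 * G.edgeFinset.card := by
        rw [← htotal]; exact hsum1.trans (hsum2 ▸ hsum3)
    _ ≤ 2 * (α * (n - 1)) := Nat.mul_le_mul_left 2 hedges
  have hlt : d * d < 2 * α * n := by
    have : 2 * (α * (n - 1)) < 2 * (α * n) := by
      have h1 : n - 1 < n := Nat.sub_lt hn one_pos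
      have h2 : α * (n - 1) < α * n :=
        Nat.mul_lt_mul_of_le_of_lt (le_refl α) h1 (Nat.lt_of_lt_of_le one_pos hα)
      omega
    calc d * d ≤ 2 * (α * (n - 1)) := hdd
    _ < 2 * (α * n) := this
    _ = 2 * α * n := by ring
  have hcast : (d : ℝ) * d < 2 * α * n := by
    have := (Nat.cast_lt (α := ℝ)).mpr hlt
    push_cast at this
    linarith
  have h0 : (0:ℝ) ≤ d := Nat.cast_nonneg d
  rw [show ((outDegree G o v : ℕ) : ℝ) = (d : ℝ) from rfl]
  rw [Real.lt_sqrt h0]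
  rw [sq]
  exact hcast
end

section
/- Let G be a finite simple graph whose edge set can be partitioned into α sets, each of which forms a forest (an acyclic subgraph). Then there exists an orientation of the edges of G in which every vertex has out-degree at most α. -/
/-- The subgraph of `G` consisting of the edges with label `i` under the edge-labeling `c`. -/
def labelGraph {V : Type*} {k : ℕ} (G : SimpleGraph V) (c : Sym2 V → Fin k) (i : Fin k) :
    SimpleGraph V where
  Adj u v := G.Adj u v ∧ c s(u, v) = i
  symm := by
    constructor
    intro u v ⟨h1, h2⟩
    exact ⟨h1.symm, by rwa [Sym2.eq_swap]⟩
  loopless := ⟨fun v ⟨h, _⟩ => G.irrefl h⟩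

/-!
Orient each forest of the decomposition separately: root every component at an arbitrary vertex
and direct each edge towards its endpoint nearer the root. Since paths in a forest are unique, a
vertex has at most one neighbour nearer the root, so it has out-degree at most one in each forest
and at most `α` in `G`.
-/

open SimpleGraph

theorem Sym2.exists_mem_forall_le {V β : Type*} [LinearOrder β] (f : V → β) (e : Sym2 V) :
    ∃ x ∈ e, ∀ y ∈ e, f x ≤ f y := by
  induction e using Sym2.ind with
  | _ a b =>
    rcases le_total (f a) (f b) with h | h
    · exact ⟨a, Sym2.mem_mk_left a b, by simp [h]⟩
    · exact ⟨b, Sym2.mem_mk_right a b, by simp [h]⟩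

namespace SimpleGraph.IsAcyclic

variable {V : Type*} {G : SimpleGraph V}

theorem mem_support_of_adj_of_dist_lt (hG : G.IsAcyclic) {u v w : V} (hadj : G.Adj v w)
    {p : G.Walk u v} (hp : p.IsPath) (hlt : G.dist u w < G.dist u v) : w ∈ p.support := by
  obtain ⟨q, hq, hqlen⟩ := (p.reachable.trans hadj.reachable).exists_path_of_dist
  refine hG.mem_support_of_ne_mem_support_of_adj_of_isPath hp hq hadj fun hv => ?_
  have hlen := congrArg Walk.length (hG.path_concat hp hq hadj hv)
  rw [Walk.length_concat, hqlen] at hlen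
  have := G.dist_le p
  omega

theorem eq_of_adj_of_dist_lt (hG : G.IsAcyclic) {u v w₁ w₂ : V} (h₁ : G.Adj v w₁)
    (h₂ : G.Adj v w₂) (hlt₁ : G.dist u w₁ < G.dist u v) (hlt₂ : G.dist u w₂ < G.dist u v) :
    w₁ = w₂ := by
  obtain ⟨p, hp, -⟩ := (Reachable.of_dist_ne_zero (by omega : G.dist u v ≠ 0)).exists_path_of_dist
  rw [hG.eq_penultimate_of_adj_end hp h₁ (hG.mem_support_of_adj_of_dist_lt h₁ hp hlt₁),
    hG.eq_penultimate_of_adj_end hp h₂ (hG.mem_support_of_adj_of_dist_lt h₂ hp hlt₂)]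

theorem exists_orientation_outDegree_le_one [Fintype V] [DecidableEq V] [DecidableRel G.Adj]
    (hG : G.IsAcyclic) : ∃ o, IsOrientation G o ∧ ∀ v, outDegree G o v ≤ 1 := by
  let root (v : V) : V := (G.connectedComponentMk v).out
  have root_reachable (v : V) : G.Reachable (root v) v :=
    ConnectedComponent.exact (G.connectedComponentMk v).out_eq
  choose o ho_mem ho_min using Sym2.exists_mem_forall_le (fun v => G.dist (root v) v)
  refine ⟨o, fun e _ => ho_mem e, fun v => Finset.card_le_one.mpr fun e₁ he₁ e₂ he₂ => ?_⟩
  have out_edge {e : Sym2 V} (he : e ∈ G.edgeFinset.filter fun e => v ∈ e ∧ o e ≠ v) :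
      e = s(v, o e) ∧ G.Adj v (o e) ∧ G.dist (root v) (o e) < G.dist (root v) v := by
    simp only [Finset.mem_filter, mem_edgeFinset] at he
    obtain ⟨hE, hv, hne⟩ := he
    have he_eq : e = s(v, o e) := (Sym2.mem_and_mem_iff hne.symm).mp ⟨hv, ho_mem e⟩
    have hadj : G.Adj v (o e) := by rwa [he_eq] at hE
    have hroot : root (o e) = root v := by
      simp only [root, ConnectedComponent.connectedComponentMk_eq_of_adj hadj]
    have hle := ho_min e v hv
    rw [hroot] at hle
    exact ⟨he_eq, hadj, lt_of_le_of_ne hle (hG.dist_ne_of_adj hadj (root_reachable v)).symm⟩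
  obtain ⟨he₁_eq, hadj₁, hlt₁⟩ := out_edge he₁
  obtain ⟨he₂_eq, hadj₂, hlt₂⟩ := out_edge he₂
  rw [he₁_eq, he₂_eq, hG.eq_of_adj_of_dist_lt hadj₁ hadj₂ hlt₁ hlt₂]

end SimpleGraph.IsAcyclic

instance {V : Type*} {k : ℕ} (G : SimpleGraph V) [DecidableRel G.Adj]
    (c : Sym2 V → Fin k) (i : Fin k) : DecidableRel (labelGraph G c i).Adj :=
  fun u v => inferInstanceAs (Decidable (G.Adj u v ∧ c s(u, v) = i))

theorem edgeSet_labelGraph {V : Type*} {k : ℕ} (G : SimpleGraph V) (c : Sym2 V → Fin k)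
    (i : Fin k) : (labelGraph G c i).edgeSet = {e ∈ G.edgeSet | c e = i} := by
  ext e
  induction e using Sym2.ind
  rfl

theorem outDegree_eq_sum_labelGraph {V : Type*} [Fintype V] [DecidableEq V] {k : ℕ}
    (G : SimpleGraph V) [DecidableRel G.Adj] (c : Sym2 V → Fin k) (o : Fin k → Sym2 V → V)
    (v : V) :
    outDegree G (fun e => o (c e) e) v = ∑ i, outDegree (labelGraph G c i) (o i) v := by
  rw [outDegree, Finset.card_eq_sum_card_fiberwise fun e _ => Finset.mem_univ (c e)]
  refine Finset.sum_congr rfl fun i _ => congrArg Finset.card ?_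
  ext e
  simp only [Finset.mem_filter, mem_edgeFinset, edgeSet_labelGraph]
  constructor
  · rintro ⟨⟨hE, hv, ho⟩, rfl⟩
    exact ⟨⟨hE, rfl⟩, hv, ho⟩
  · rintro ⟨⟨hE, rfl⟩, hv, ho⟩
    exact ⟨⟨hE, hv, ho⟩, rfl⟩

/-- Let `G` be a finite simple graph whose edge set can be partitioned into `α`
sets, each of which forms a forest. Then there exists an orientation of the edges of `G` in which
every vertex has out-degree at most `α`. -/
theorem stmt2 {V : Type*} [Fintype V] [DecidableEq V] (G : SimpleGraph V) [DecidableRel G.Adj]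
    (α : ℕ) (c : Sym2 V → Fin α) (hforest : ∀ i : Fin α, (labelGraph G c i).IsAcyclic) :
    ∃ o : Sym2 V → V, IsOrientation G o ∧ ∀ v : V, outDegree G o v ≤ α := by
  choose o ho_orient ho_deg using fun i => (hforest i).exists_orientation_outDegree_le_one
  refine ⟨fun e => o (c e) e, fun e he => ho_orient (c e) e ?_, fun v => ?_⟩
  · rw [edgeSet_labelGraph]
    exact ⟨he, rfl⟩
  · calc outDegree G (fun e => o (c e) e) v = ∑ i, outDegree (labelGraph G c i) (o i) v :=
          outDegree_eq_sum_labelGraph G c o v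
      _ ≤ ∑ _i : Fin α, 1 := Finset.sum_le_sum fun i _ => ho_deg i v
      _ = α := by simp
end
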